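/- arXiv:math/0107203 — 4 statements merged into one kernel-verified Lean document; each statement's English description precedes it below -/
import Mathlib

section
/- Let a, b, c be positive integers and r, s, t natural numbers with ab + 1 = r², ac + 1 = s², bc + 1 = t². Then d := a + b + c + 2abc + 2rst is a positive integer satisfying P₄(a,b,c,d) = 0, and each of ad + 1, bd + 1, cd + 1 is a perfect square (Arkin–Hoggatt–Strauss extension of a Diophantine triple to a regular Diophantine quadruple). -/
/-- The regular Diophantine quadruple polynomial. -/
def P4 {R : Type*} [CommRing R] (a b c d : R) : R :=
  a^2 + b^2 + c^2 + d^2 - 2*a*b - 2*a*c - 2*a*d - 2*b*c - 2*b*d - 2*c*d - 4*a*b*c*d - 4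

/-- Arkin–Hoggatt–Strauss extension of a Diophantine triple to a regular
Diophantine quadruple. -/
theorem AHS_extension (a b c : ℤ) (ha : 0 < a) (hb : 0 < b) (hc : 0 < c)
    (r s t : ℕ) (hr : a*b + 1 = (r : ℤ)^2) (hs : a*c + 1 = (s : ℤ)^2)
    (ht : b*c + 1 = (t : ℤ)^2) :
    0 < a + b + c + 2*a*b*c + 2*(r:ℤ)*s*t ∧
    P4 a b c (a + b + c + 2*a*b*c + 2*(r:ℤ)*s*t) = 0 ∧
    (∃ u : ℤ, a*(a + b + c + 2*a*b*c + 2*(r:ℤ)*s*t) + 1 = u^2) ∧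
    (∃ v : ℤ, b*(a + b + c + 2*a*b*c + 2*(r:ℤ)*s*t) + 1 = v^2) ∧
    (∃ w : ℤ, c*(a + b + c + 2*a*b*c + 2*(r:ℤ)*s*t) + 1 = w^2) := by
  have hrn : (0:ℤ) ≤ (r:ℤ) := Int.natCast_nonneg r
  have hsn : (0:ℤ) ≤ (s:ℤ) := Int.natCast_nonneg s
  have htn : (0:ℤ) ≤ (t:ℤ) := Int.natCast_nonneg t
  refine ⟨by positivity, ?_, ⟨a*(t:ℤ) + (s:ℤ)*(r:ℤ), ?_⟩,
      ⟨b*(s:ℤ) + (t:ℤ)*(r:ℤ), ?_⟩, ⟨c*(r:ℤ) + (s:ℤ)*(t:ℤ), ?_⟩⟩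
  · unfold P4
    linear_combination (-4*(s:ℤ)^2*(t:ℤ)^2) * hr + (-4*(t:ℤ)^2 - 4*a*b*(t:ℤ)^2) * hs +
      (-4 - 4*a*c - 4*a*b - 4*a^2*b*c) * ht
  · linear_combination (s:ℤ)^2 * hr + (a*b+1) * hs + a^2 * ht
  · linear_combination (t:ℤ)^2 * hr + b^2 * hs + (a*b+1) * ht
  · linear_combination c^2 * hr + (c*b+1) * hs + (s:ℤ)^2 * ht
end

section
/- Let c, s, x₁, x₂, x₃, x₄, y₁, y₂, y₃, y₄, z₁₂, z₃₄ be elements of a commutative ring with c² + s² = 1, x₁x₂ + y₃y₄ = z₁₂², x₃x₄ + y₁y₂ = z₃₄², and x₁y₁ + x₂y₂ − x₃y₃ − x₄y₄ = 2·z₁₂·z₃₄. Define x'₁ = c·x₁ + s·y₂, y'₂ = −s·x₁ + c·y₂, x'₂ = c·x₂ + s·y₁, y'₁ = −s·x₂ + c·y₁, x'₃ = c·x₃ + s·y₄, y'₄ = −s·x₃ + c·y₄, x'₄ = c·x₄ + s·y₃, y'₃ = −s·x₄ + c·y₃. Then x'₁x'₂ + y'₃y'₄ = (c·z₁₂ +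 s·z₃₄)² and x'₃x'₄ + y'₁y'₂ = (−s·z₁₂ + c·z₃₄)². -/
theorem rotation_transforms_roots {R : Type*} [CommRing R]
    (c s x1 x2 x3 x4 y1 y2 y3 y4 z12 z34 : R)
    (hcs : c^2 + s^2 = 1)
    (h12 : x1*x2 + y3*y4 = z12^2)
    (h34 : x3*x4 + y1*y2 = z34^2)
    (hz : x1*y1 + x2*y2 - x3*y3 - x4*y4 = 2*z12*z34)
    (x1' x2' x3' x4' y1' y2' y3' y4' : R)
    (hx1 : x1' = c*x1 + s*y2) (hy2 : y2' = -s*x1 + c*y2)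
    (hx2 : x2' = c*x2 + s*y1) (hy1 : y1' = -s*x2 + c*y1)
    (hx3 : x3' = c*x3 + s*y4) (hy4 : y4' = -s*x3 + c*y4)
    (hx4 : x4' = c*x4 + s*y3) (hy3 : y3' = -s*x4 + c*y3) :
    x1'*x2' + y3'*y4' = (c*z12 + s*z34)^2 ∧
    x3'*x4' + y1'*y2' = (-s*z12 + c*z34)^2 := by
  subst hx1 hx2 hx3 hx4 hy1 hy2 hy3 hy4
  constructor
  · linear_combination c^2*h12 + s^2*h34 + c*s*hz
  · linear_combination s^2*h12 + c^2*h34 - c*s*hz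
end

section
/- Let p₀, p₁, q₀, q₁, r₀, r₁, b₀, b₁, b₂, b₃ be elements of a commutative ring, set p^L = (p₁, −p₀), q^L = (q₁, −q₀), r^L = (r₁, −r₀), and define the 2×2×2 hypermatrix a_{ijk} = b₀·p^L_i·q^L_j·r^L_k + b₁·p_i·q^L_j·r^L_k + b₂·p^L_i·q_j·r^L_k + b₃·p^L_i·q^L_j·r_k. Then for every m ∈ {0,1}: a_{m01}·a_{m10} − a_{m00}·a_{m11} = b₂·b₃·(r₀² + r₁²)·(q₀² + q₁²)·(p^L_m)²; a_{0m1}·a_{1m0} − a_{0m0}·a_{1m1} = b₁·b₃·(p₀² + p₁²)·(r₀² + r₁²)·(q^L_m)²; and a_{01m}·a_{10m} − a_{00m}·a_{11m} = b₁·b₂·(p₀² + p₁²)·(q₀² + q₁²)·(r^L_m)². -/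
/-- The face determinants of the parameterised 2×2×2 hypermatrix (22). -/
theorem param_hypermatrix_face_determinants {R : Type*} [CommRing R]
    (p q r : Fin 2 → R) (b0 b1 b2 b3 : R)
    (pL qL rL : Fin 2 → R)
    (hpL : pL = ![p 1, -p 0]) (hqL : qL = ![q 1, -q 0]) (hrL : rL = ![r 1, -r 0])
    (a : Fin 2 → Fin 2 → Fin 2 → R)
    (ha : ∀ i j k, a i j k =
      b0 * pL i * qL j * rL k + b1 * p i * qL j * rL k
        + b2 * pL i * q j * rL k + b3 * pL i * qL j * r k) :
    ∀ m : Fin 2,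
      a m 0 1 * a m 1 0 - a m 0 0 * a m 1 1
        = b2 * b3 * ((r 0)^2 + (r 1)^2) * ((q 0)^2 + (q 1)^2) * (pL m)^2 ∧
      a 0 m 1 * a 1 m 0 - a 0 m 0 * a 1 m 1
        = b1 * b3 * ((p 0)^2 + (p 1)^2) * ((r 0)^2 + (r 1)^2) * (qL m)^2 ∧
      a 0 1 m * a 1 0 m - a 0 0 m * a 1 1 m
        = b1 * b2 * ((p 0)^2 + (p 1)^2) * ((q 0)^2 + (q 1)^2) * (rL m)^2 := by
  intro m
  subst hpL hqL hrL
  fin_cases m <;>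
    refine ⟨?_, ?_, ?_⟩ <;>
    simp only [ha, Matrix.cons_val_zero, Matrix.cons_val_one, Matrix.head_cons] <;>
    ring
end

section
/- Let a_{ijk} (i, j, k ∈ {0,1}) be a 2×2×2 hypermatrix over a commutative ring. Define I₁ = Σ ε_{ab}ε_{cd}ε_{ij}ε_{kl}ε_{rs}ε_{tu}·a_{air}·a_{bkt}·a_{cju}·a_{dls}, I₂ = Σ ε_{ab}ε_{cd}ε_{ij}ε_{kl}ε_{rs}ε_{tu}·a_{air}·a_{bjt}·a_{cks}·a_{dlu}, I₃ = Σ ε_{ab}ε_{cd}ε_{ij}ε_{kl}ε_{rs}ε_{tu}·a_{air}·a_{bks}·a_{cjt}·a_{dlu}, and I₄ = Σ ε_{ab}ε_{cd}ε_{ij}ε_{kl}ε_{rs}ε_{tu}·a_{air}·a_{cjs}·a_{bkt}·a_{dlu}, where each sum is over all indices in {0,1}. Then I₁ = 0 and I₂ = I₃ = I₄. -/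
/-- The 2×2 alternating tensor: ε₀₁ = 1, ε₁₀ = −1, ε₀₀ = ε₁₁ = 0. -/
def eps {R : Type*} [CommRing R] : Fin 2 → Fin 2 → R :=
  fun i j => if i = 0 ∧ j = 1 then 1 else if i = 1 ∧ j = 0 then -1 else 0


lemma eps00 {R : Type*} [CommRing R] : (eps 0 0 : R) = 0 := by simp [eps]
lemma eps01 {R : Type*} [CommRing R] : (eps 0 1 : R) = 1 := by simp [eps]
lemma eps10 {R : Type*} [CommRing R] : (eps 1 0 : R) = -1 := by simp [eps]
lemma eps11 {R : Type*} [CommRing R] : (eps 1 1 : R) = 0 := by simp [eps]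

theorem quartic_invariants {R : Type*} [CommRing R]
    (A : Fin 2 → Fin 2 → Fin 2 → R)
    (I1 I2 I3 I4 : R)
    (hI1 : I1 = ∑ a : Fin 2, ∑ b : Fin 2, ∑ c : Fin 2, ∑ d : Fin 2,
      ∑ i : Fin 2, ∑ j : Fin 2, ∑ k : Fin 2, ∑ l : Fin 2,
      ∑ r : Fin 2, ∑ s : Fin 2, ∑ t : Fin 2, ∑ u : Fin 2,
      eps a b * eps c d * eps i j * eps k l * eps r s * eps t u *
        A a i r * A b k t * A c j u * A d l s)
    (hI2 : I2 = ∑ a : Fin 2, ∑ b : Fin 2, ∑ c : Fin 2, ∑ d : Fin 2,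
      ∑ i : Fin 2, ∑ j : Fin 2, ∑ k : Fin 2, ∑ l : Fin 2,
      ∑ r : Fin 2, ∑ s : Fin 2, ∑ t : Fin 2, ∑ u : Fin 2,
      eps a b * eps c d * eps i j * eps k l * eps r s * eps t u *
        A a i r * A b j t * A c k s * A d l u)
    (hI3 : I3 = ∑ a : Fin 2, ∑ b : Fin 2, ∑ c : Fin 2, ∑ d : Fin 2,
      ∑ i : Fin 2, ∑ j : Fin 2, ∑ k : Fin 2, ∑ l : Fin 2,
      ∑ r : Fin 2, ∑ s : Fin 2, ∑ t : Fin 2, ∑ u : Fin 2,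
      eps a b * eps c d * eps i j * eps k l * eps r s * eps t u *
        A a i r * A b k s * A c j t * A d l u)
    (hI4 : I4 = ∑ a : Fin 2, ∑ b : Fin 2, ∑ c : Fin 2, ∑ d : Fin 2,
      ∑ i : Fin 2, ∑ j : Fin 2, ∑ k : Fin 2, ∑ l : Fin 2,
      ∑ r : Fin 2, ∑ s : Fin 2, ∑ t : Fin 2, ∑ u : Fin 2,
      eps a b * eps c d * eps i j * eps k l * eps r s * eps t u *
        A a i r * A c j s * A b k t * A d l u) :
    I1 = 0 ∧ I2 = I3 ∧ I3 = I4 := by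
  subst hI1 hI2 hI3 hI4
  refine ⟨?_, ?_, ?_⟩ <;>
  · simp only [Fin.sum_univ_two, eps00, eps01, eps10, eps11, zero_mul, mul_zero,
      one_mul, mul_one, neg_mul, mul_neg, neg_neg, add_zero, zero_add, neg_zero]
    ring
end
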